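/- arXiv:1112.5741 — 7 statements merged into one kernel-verified Lean document; each statement's English description precedes it below -/
import Mathlib

section
/- If f: {0,1}^n → {0,1} is ε-far from every k-junta and J ⊆ [n] has |J| ≤ k, then Inf_f([n] \ J) ≥ ε. -/
open Finset

variable {n : ℕ}

/-- `override J x y` is the vector equal to `y` on `J` and `x` elsewhere. -/
def override (J : Finset (Fin n)) (x y : Fin n → Bool) : Fin n → Bool :=
  fun i => if i ∈ J then y i else x i

/-- Influence of the set `J` in `f`. -/
noncomputable def Infl (f : (Fin n → Bool) → Bool) (J : Finset (Fin n)) : ℝ :=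
  ((Finset.univ.filter (fun p : (Fin n → Bool) × (Fin n → Bool) =>
      f p.1 ≠ f (override J p.1 p.2))).card : ℝ) / ((2 ^ n : ℝ) * (2 ^ n : ℝ))

/-- Normalized Hamming distance between Boolean functions. -/
noncomputable def hdist (f g : (Fin n → Bool) → Bool) : ℝ :=
  ((Finset.univ.filter (fun x => f x ≠ g x)).card : ℝ) / (2 ^ n : ℝ)

/-- `g` is a `k`-junta: it depends on at most `k` variables. -/
def IsJunta (k : ℕ) (g : (Fin n → Bool) → Bool) : Prop :=
  ∃ S : Finset (Fin n), S.card ≤ k ∧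
    ∀ x y : Fin n → Bool, (∀ i ∈ S, x i = y i) → g x = g y

/-- The permutations of `[n]` fixing every element outside `J`. -/
def permsOn (J : Finset (Fin n)) : Finset (Equiv.Perm (Fin n)) :=
  Finset.univ.filter (fun π => ∀ i ∉ J, π i = i)

/-- The action of a permutation on a vector: `(π • x)_{π(i)} = x_i`. -/
def permApply (π : Equiv.Perm (Fin n)) (x : Fin n → Bool) : Fin n → Bool :=
  fun j => x (π.symm j)

/-- Symmetric influence of the set `J` in `f`. -/
noncomputable def SymInf (f : (Fin n → Bool) → Bool) (J : Finset (Fin n)) : ℝ :=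
  (((Finset.univ ×ˢ permsOn J).filter (fun p : (Fin n → Bool) × Equiv.Perm (Fin n) =>
      f p.1 ≠ f (permApply p.2 p.1))).card : ℝ) /
    ((2 ^ n : ℝ) * ((permsOn J).card : ℝ))

/-- `f` is `J`-symmetric: invariant under permuting the coordinates in `J`. -/
def JSymmetric (f : (Fin n → Bool) → Bool) (J : Finset (Fin n)) : Prop :=
  ∀ x : Fin n → Bool, ∀ π ∈ permsOn J, f (permApply π x) = f x

/-- `f` is `t`-symmetric: it is `J`-symmetric for some `J` of size at least `t`. -/
def TSymmetric (t : ℕ) (f : (Fin n → Bool) → Bool) : Prop :=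
  ∃ J : Finset (Fin n), t ≤ J.card ∧ JSymmetric f J

/-- if `f` is `ε`-far from every `k`-junta and `|J| ≤ k`,
then the influence of the complement of `J` is at least `ε`. -/
theorem infl_compl_ge_of_far_from_junta (n k : ℕ) (ε : ℝ)
    (f : (Fin n → Bool) → Bool)
    (hfar : ∀ g : (Fin n → Bool) → Bool, IsJunta k g → ε ≤ hdist f g)
    (J : Finset (Fin n)) (hJ : J.card ≤ k) :
    ε ≤ Infl f Jᶜ := by
  classical
  set g : (Fin n → Bool) → Bool := fun x =>
    decide (2 ^ n ≤ 2 * (Finset.univ.filter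
      (fun y => f (override Jᶜ x y) = true)).card) with hgdef
  -- override only depends on x through its values on J
  have hov_eq : ∀ x x' : Fin n → Bool, (∀ i ∈ J, x i = x' i) →
      ∀ y, override Jᶜ x y = override Jᶜ x' y := by
    intro x x' h y
    funext i
    by_cases hi : i ∈ Jᶜ
    · simp [override, hi]
    · have hiJ : i ∈ J := not_not.mp (by simpa using hi)
      simp [override, hi, h i hiJ]
  -- g only depends on values on J
  have hg_eq : ∀ x x' : Fin n → Bool, (∀ i ∈ J, x i = x' i) → g x = g x' := by
    intro x x' h
    have : (fun y => f (override Jᶜ x y) = true)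
        = (fun y => f (override Jᶜ x' y) = true) := by
      funext y; rw [hov_eq x x' h y]
    simp only [hgdef, this]
  have hjunta : IsJunta k g := ⟨J, hJ, hg_eq⟩
  -- override Jᶜ x y agrees with x on J
  have hov_agree : ∀ x y : Fin n → Bool, ∀ i ∈ J, override Jᶜ x y i = x i := by
    intro x y i hi
    have : i ∉ Jᶜ := by simp [hi]
    simp [override, this]
  have hg_ov : ∀ x y : Fin n → Bool, g (override Jᶜ x y) = g x := by
    intro x y
    exact hg_eq _ _ (fun i hi => hov_agree x y i hi)
  -- the involution fact
  have hinv : ∀ x y : Fin n → Bool,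
      override Jᶜ (override Jᶜ x y) (override Jᶜ y x) = x := by
    intro x y
    funext i
    by_cases hi : i ∈ Jᶜ <;> simp [override, hi]
  -- majority property: at least half the y's give f(ov x y) = g x
  have hmaj : ∀ x : Fin n → Bool,
      2 ^ n ≤ 2 * (Finset.univ.filter (fun y => f (override Jᶜ x y) = g x)).card := by
    intro x
    have hcardU : (Finset.univ : Finset (Fin n → Bool)).card = 2 ^ n := by
      simp [Finset.card_univ]
    have hsplit := Finset.card_filter_add_card_filter_not
      (s := (Finset.univ : Finset (Fin n → Bool)))
      (p := fun y => f (override Jᶜ x y) = true)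
    rw [hcardU] at hsplit
    by_cases h : 2 ^ n ≤ 2 * (Finset.univ.filter
        (fun y => f (override Jᶜ x y) = true)).card
    · have hgx : g x = true := by simp [hgdef, h]
      rw [hgx]; exact h
    · have hgx : g x = false := by simp [hgdef, h]
      rw [hgx]
      have : (Finset.univ.filter (fun y => f (override Jᶜ x y) = false)).card
          = (Finset.univ.filter (fun y => ¬ (f (override Jᶜ x y) = true))).card := by
        congr 1
        apply Finset.filter_congr
        intro y _
        simp
      rw [this]
      omega
  -- notation for the three pair sets
  set S1 : Finset ((Fin n → Bool) × (Fin n → Bool)) :=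
    Finset.univ.filter (fun p => f p.1 ≠ g p.1 ∧ f (override Jᶜ p.1 p.2) = g p.1) with hS1def
  set S2 : Finset ((Fin n → Bool) × (Fin n → Bool)) :=
    Finset.univ.filter (fun p => f p.1 = g p.1 ∧ f (override Jᶜ p.1 p.2) ≠ g p.1) with hS2def
  set Bs : Finset ((Fin n → Bool) × (Fin n → Bool)) :=
    Finset.univ.filter (fun p : (Fin n → Bool) × (Fin n → Bool) =>
      f p.1 ≠ f (override Jᶜ p.1 p.2)) with hBdef
  set A : Finset (Fin n → Bool) := Finset.univ.filter (fun x => f x ≠ g x) with hAdef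
  -- S1.card as a sum over A
  have hS1card : S1.card = ∑ x ∈ A,
      (Finset.univ.filter (fun y => f (override Jᶜ x y) = g x)).card := by
    rw [hS1def, Finset.card_filter, Fintype.sum_prod_type, hAdef, Finset.sum_filter]
    apply Finset.sum_congr rfl
    intro x _
    by_cases hx : f x = g x
    · simp [hx]
    · rw [if_pos hx, Finset.card_filter]
      apply Finset.sum_congr rfl
      intro y _
      simp [hx]
  -- key counting inequality: A.card * 2^n ≤ 2 * S1.card
  have hkey : A.card * 2 ^ n ≤ 2 * S1.card := by
    rw [hS1card, Finset.mul_sum]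
    calc A.card * 2 ^ n = ∑ _x ∈ A, 2 ^ n := by rw [Finset.sum_const, smul_eq_mul]
      _ ≤ ∑ x ∈ A, 2 * (Finset.univ.filter (fun y => f (override Jᶜ x y) = g x)).card :=
        Finset.sum_le_sum (fun x _ => hmaj x)
  -- S2.card = S1.card via the involution
  have hcard12 : S1.card = S2.card := by
    apply Finset.card_bij' (fun p _ => (override Jᶜ p.1 p.2, override Jᶜ p.2 p.1))
      (fun p _ => (override Jᶜ p.1 p.2, override Jᶜ p.2 p.1))
    · intro p hp
      simp only [hS1def, Finset.mem_filter, Finset.mem_univ, true_and] at hp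
      simp only [hS2def, Finset.mem_filter, Finset.mem_univ, true_and]
      constructor
      · rw [hg_ov]; exact hp.2
      · rw [hg_ov, hinv]; exact hp.1
    · intro p hp
      simp only [hS2def, Finset.mem_filter, Finset.mem_univ, true_and] at hp
      simp only [hS1def, Finset.mem_filter, Finset.mem_univ, true_and]
      constructor
      · rw [hg_ov]; exact hp.2
      · rw [hg_ov, hinv]; exact hp.1
    · intro p _
      exact Prod.ext (hinv p.1 p.2) (hinv p.2 p.1)
    · intro p _
      exact Prod.ext (hinv p.1 p.2) (hinv p.2 p.1)
  -- S1 and S2 are disjoint subsets of Bs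
  have hdisj : Disjoint S1 S2 := by
    rw [Finset.disjoint_left]
    intro p hp1 hp2
    simp only [hS1def, Finset.mem_filter] at hp1
    simp only [hS2def, Finset.mem_filter] at hp2
    exact hp1.2.1 hp2.2.1
  have hsub : S1 ∪ S2 ⊆ Bs := by
    intro p hp
    simp only [hBdef, Finset.mem_filter, Finset.mem_univ, true_and]
    rcases Finset.mem_union.mp hp with h | h
    · simp only [hS1def, Finset.mem_filter] at h
      intro hc; exact h.2.1 (hc.trans h.2.2)
    · simp only [hS2def, Finset.mem_filter] at h
      intro hc; exact h.2.2 (hc.symm.trans h.2.1)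
  have hBge : A.card * 2 ^ n ≤ Bs.card := by
    have h2 : S1.card + S2.card ≤ Bs.card := by
      rw [← Finset.card_union_of_disjoint hdisj]
      exact Finset.card_le_card hsub
    omega
  -- conclude
  have h1 : ε ≤ hdist f g := hfar g hjunta
  have h2 : hdist f g ≤ Infl f Jᶜ := by
    unfold hdist Infl
    rw [div_le_div_iff₀ (by positivity) (by positivity)]
    have hcast : (A.card : ℝ) * 2 ^ n ≤ (Bs.card : ℝ) := by
      exact_mod_cast hBge
    have hA' : ((Finset.univ.filter (fun x => f x ≠ g x)).card : ℝ) = (A.card : ℝ) := by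
      rw [hAdef]
    have hB' : ((Finset.univ.filter (fun p : (Fin n → Bool) × (Fin n → Bool) =>
        f p.1 ≠ f (override Jᶜ p.1 p.2))).card : ℝ) = (Bs.card : ℝ) := by
      rw [hBdef]
    rw [hA', hB']
    have hpow : (0:ℝ) ≤ 2 ^ n := by positivity
    nlinarith [hcast, hpow]
  linarith
end

section
/- If f: {0,1}^n → {0,1} is ε-far from every k-junta, then the family F = {J ⊆ [n] : Inf_f([n] \ J) < ε/2} is (k+1)-intersecting: every two sets J, K ∈ F satisfy |J ∩ K| ≥ k+1. -/
open Finset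

variable {n : ℕ}

private lemma override_invol (A : Finset (Fin n)) :
    Function.Involutive (fun p : (Fin n → Bool) × (Fin n → Bool) =>
      (override A p.1 p.2, override A p.2 p.1)) := by
  rintro ⟨x, z⟩
  simp only [Prod.mk.injEq]
  constructor <;> (funext i; by_cases h : i ∈ A <;> simp [override, h])

private lemma sum_override_aux (A : Finset (Fin n)) (F : (Fin n → Bool) → ℕ) :
    ∑ x : Fin n → Bool, ∑ z : Fin n → Bool, F (override A x z)
      = 2 ^ n * ∑ u : Fin n → Bool, F u := by
  have hcard : Fintype.card (Fin n → Bool) = 2 ^ n := by simp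
  have h1 : ∑ x : Fin n → Bool, ∑ z : Fin n → Bool, F (override A x z)
      = ∑ p : (Fin n → Bool) × (Fin n → Bool), F (override A p.1 p.2) :=
    (Fintype.sum_prod_type (fun p : (Fin n → Bool) × (Fin n → Bool) =>
      F (override A p.1 p.2))).symm
  have h2 : ∑ p : (Fin n → Bool) × (Fin n → Bool), F (override A p.1 p.2)
      = ∑ q : (Fin n → Bool) × (Fin n → Bool), F q.1 := by
    have h := Equiv.sum_comp ((override_invol A).toPerm)
      (fun q : (Fin n → Bool) × (Fin n → Bool) => F q.1)
    simpa [Function.Involutive.coe_toPerm] using h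
  rw [h1, h2, Fintype.sum_prod_type]
  simp only [Finset.sum_const, Finset.card_univ, hcard, smul_eq_mul]
  rw [← Finset.mul_sum]

private lemma count_le_real {n : ℕ} {c : ℕ} {e : ℝ} (hpos : (0:ℝ) < (2:ℝ)^n)
    (h : e ≤ (c : ℝ) / (2:ℝ)^n) : e * 2^n ≤ (c : ℝ) :=
  (le_div_iff₀ hpos).1 h

/-- the family of sets whose complement has influence below `ε/2`
is `(k+1)`-intersecting when `f` is `ε`-far from every `k`-junta. -/
theorem low_influence_family_intersecting (n k : ℕ) (ε : ℝ)
    (f : (Fin n → Bool) → Bool)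
    (hfar : ∀ g : (Fin n → Bool) → Bool, IsJunta k g → ε ≤ hdist f g)
    (J K : Finset (Fin n))
    (hJ : Infl f Jᶜ < ε / 2) (hK : Infl f Kᶜ < ε / 2) :
    k + 1 ≤ (J ∩ K).card := by
  by_contra hcon
  push_neg at hcon
  have hcard : (J ∩ K).card ≤ k := by omega
  have hpos : (0:ℝ) < (2:ℝ) ^ n := by positivity
  have hcardV : Fintype.card (Fin n → Bool) = 2 ^ n := by simp
  set g : (Fin n → Bool) → (Fin n → Bool) → (Fin n → Bool) → Bool :=
    fun z1 z2 x => f (override Jᶜ (override Kᶜ x z2) z1) with hg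
  have hjunta : ∀ z1 z2, IsJunta k (g z1 z2) := by
    intro z1 z2
    refine ⟨J ∩ K, hcard, fun x y hxy => ?_⟩
    simp only [hg]
    congr 1
    funext i
    by_cases hB : i ∈ Jᶜ
    · simp [override, hB]
    · by_cases hA : i ∈ Kᶜ
      · simp [override, hA, hB]
      · have hi : i ∈ J ∩ K := by
          simp only [Finset.mem_compl, not_not] at hA hB
          exact Finset.mem_inter.2 ⟨hB, hA⟩
        simp [override, hA, hB, hxy i hi]
  set D : (Fin n → Bool) → (Fin n → Bool) → ℕ :=
    fun z1 z2 => (univ.filter (fun x => f x ≠ g z1 z2 x)).card with hD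
  have hfar' : ∀ z1 z2, ε * 2 ^ n ≤ (D z1 z2 : ℝ) := by
    intro z1 z2
    have h := hfar (g z1 z2) (hjunta z1 z2)
    simp only [hdist] at h
    exact count_le_real hpos h
  set N1 : ℕ := (univ.filter (fun p : (Fin n → Bool) × (Fin n → Bool) =>
      f p.1 ≠ f (override Kᶜ p.1 p.2))).card with hN1def
  set N2 : ℕ := (univ.filter (fun p : (Fin n → Bool) × (Fin n → Bool) =>
      f p.1 ≠ f (override Jᶜ p.1 p.2))).card with hN2def
  have hN1lt : (N1 : ℝ) < ε / 2 * ((2:ℝ)^n * (2:ℝ)^n) := by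
    have := hK
    simp only [Infl, hN1def] at this ⊢
    exact (div_lt_iff₀ (by positivity)).1 this
  have hN2lt : (N2 : ℝ) < ε / 2 * ((2:ℝ)^n * (2:ℝ)^n) := by
    have := hJ
    simp only [Infl, hN2def] at this ⊢
    exact (div_lt_iff₀ (by positivity)).1 this
  -- pointwise split of the disagreement count
  have hsplit : ∀ z1 z2 : Fin n → Bool, D z1 z2 ≤
      (univ.filter (fun x => f x ≠ f (override Kᶜ x z2))).card +
      (univ.filter (fun x : Fin n → Bool =>
        f (override Kᶜ x z2) ≠ f (override Jᶜ (override Kᶜ x z2) z1))).card := by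
    intro z1 z2
    refine le_trans (card_le_card ?_) (card_union_le _ _)
    intro x hx
    simp only [hD, hg, mem_filter, mem_union, mem_univ, true_and] at hx ⊢
    by_cases h : f x = f (override Kᶜ x z2)
    · right; rw [← h]; exact hx
    · left; exact h
  have hsum1 : ∑ z1 : Fin n → Bool, ∑ z2 : Fin n → Bool,
      (univ.filter (fun x => f x ≠ f (override Kᶜ x z2))).card = 2 ^ n * N1 := by
    have hN1 : N1 = ∑ z2 : Fin n → Bool,
        (univ.filter (fun x => f x ≠ f (override Kᶜ x z2))).card := by
      simp only [hN1def, Finset.card_filter]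
      rw [Fintype.sum_prod_type]
      exact Finset.sum_comm
    rw [Finset.sum_const, Finset.card_univ, hcardV, smul_eq_mul, ← hN1]
  have hsum2 : ∑ z1 : Fin n → Bool, ∑ z2 : Fin n → Bool,
      (univ.filter (fun x : Fin n → Bool =>
        f (override Kᶜ x z2) ≠ f (override Jᶜ (override Kᶜ x z2) z1))).card
      = 2 ^ n * N2 := by
    have key : ∀ z1 : Fin n → Bool, ∑ z2 : Fin n → Bool,
        (univ.filter (fun x : Fin n → Bool =>
          f (override Kᶜ x z2) ≠ f (override Jᶜ (override Kᶜ x z2) z1))).card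
        = 2 ^ n * ∑ u : Fin n → Bool,
            (if f u ≠ f (override Jᶜ u z1) then 1 else 0) := by
      intro z1
      calc ∑ z2 : Fin n → Bool, (univ.filter (fun x : Fin n → Bool =>
              f (override Kᶜ x z2) ≠ f (override Jᶜ (override Kᶜ x z2) z1))).card
          = ∑ z2 : Fin n → Bool, ∑ x : Fin n → Bool,
              (if f (override Kᶜ x z2) ≠ f (override Jᶜ (override Kᶜ x z2) z1)
                then 1 else 0) := by
            simp only [Finset.card_filter]
        _ = ∑ x : Fin n → Bool, ∑ z2 : Fin n → Bool,
              (if f (override Kᶜ x z2) ≠ f (override Jᶜ (override Kᶜ x z2) z1)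
                then 1 else 0) := Finset.sum_comm
        _ = 2 ^ n * ∑ u : Fin n → Bool,
              (if f u ≠ f (override Jᶜ u z1) then 1 else 0) :=
            sum_override_aux Kᶜ (fun u => if f u ≠ f (override Jᶜ u z1) then 1 else 0)
    have hN2 : N2 = ∑ z1 : Fin n → Bool, ∑ u : Fin n → Bool,
        (if f u ≠ f (override Jᶜ u z1) then 1 else 0) := by
      simp only [hN2def, Finset.card_filter]
      rw [Fintype.sum_prod_type]
      exact Finset.sum_comm
    calc ∑ z1 : Fin n → Bool, ∑ z2 : Fin n → Bool,
          (univ.filter (fun x : Fin n → Bool =>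
            f (override Kᶜ x z2) ≠ f (override Jᶜ (override Kᶜ x z2) z1))).card
        = ∑ z1 : Fin n → Bool, 2 ^ n * ∑ u : Fin n → Bool,
            (if f u ≠ f (override Jᶜ u z1) then 1 else 0) := by
          exact Finset.sum_congr rfl (fun z1 _ => key z1)
      _ = 2 ^ n * ∑ z1 : Fin n → Bool, ∑ u : Fin n → Bool,
            (if f u ≠ f (override Jᶜ u z1) then 1 else 0) := by
          rw [Finset.mul_sum]
      _ = 2 ^ n * N2 := by rw [← hN2]
  have hT : ∑ z1 : Fin n → Bool, ∑ z2 : Fin n → Bool, D z1 z2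
      ≤ 2 ^ n * N1 + 2 ^ n * N2 := by
    calc ∑ z1 : Fin n → Bool, ∑ z2 : Fin n → Bool, D z1 z2
        ≤ ∑ z1 : Fin n → Bool, ∑ z2 : Fin n → Bool,
            ((univ.filter (fun x => f x ≠ f (override Kᶜ x z2))).card +
             (univ.filter (fun x : Fin n → Bool =>
               f (override Kᶜ x z2) ≠ f (override Jᶜ (override Kᶜ x z2) z1))).card) :=
          Finset.sum_le_sum (fun z1 _ => Finset.sum_le_sum (fun z2 _ => hsplit z1 z2))
      _ = 2 ^ n * N1 + 2 ^ n * N2 := by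
          simp only [Finset.sum_add_distrib]
          rw [hsum1, hsum2]
  have hbig : ε * 2 ^ n * ((2:ℝ) ^ n * (2:ℝ) ^ n)
      ≤ ((∑ z1 : Fin n → Bool, ∑ z2 : Fin n → Bool, D z1 z2 : ℕ) : ℝ) := by
    push_cast
    calc ε * 2 ^ n * ((2:ℝ) ^ n * (2:ℝ) ^ n)
        = ∑ _z1 : Fin n → Bool, ∑ _z2 : Fin n → Bool, (ε * 2 ^ n) := by
          rw [Finset.sum_const, Finset.sum_const, Finset.card_univ, hcardV]
          simp only [nsmul_eq_mul]
          push_cast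
          ring
      _ ≤ ∑ z1 : Fin n → Bool, ∑ z2 : Fin n → Bool, (D z1 z2 : ℝ) :=
          Finset.sum_le_sum (fun z1 _ => Finset.sum_le_sum (fun z2 _ => hfar' z1 z2))
  have hTc : ((∑ z1 : Fin n → Bool, ∑ z2 : Fin n → Bool, D z1 z2 : ℕ) : ℝ)
      ≤ (2:ℝ) ^ n * N1 + (2:ℝ) ^ n * N2 := by exact_mod_cast hT
  nlinarith [hbig, hTc, hN1lt, hN2lt, hpos]
end

section
/- Let f: {0,1}^n → {0,1}, J ⊆ [n], and let f_J be a J-symmetric function closest to f in normalized Hamming distance. Then dist(f, f_J) ≤ SymInf_f(J) ≤ 2·dist(f, f_J). -/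
open Finset

variable {n : ℕ}

/-! Let `p x` be the fraction of the `S_J`-orbit of `x` on which `f` is true. For every
`S_J`-invariant `b`, the sum over the cube of `φ + b - 2 φ b` does not change when `φ = [f]` is
replaced by its orbit mean `p`, because the expression is affine in `φ` with an invariant
coefficient. With `b = [g]` for a `J`-symmetric `g` this gives `dist(f, g) = E[p + [g] - 2 p [g]]`,
and with `b = p` it gives `SymInf_f(J) = E[2 p (1 - p)]`. Now `p (1 - p) ≤ min (p, 1 - p)` gives
the upper bound, and for the orbit majority `g = [p ≥ 1/2]` the pointwise bound
`min (p, 1 - p) ≤ 2 p (1 - p)` gives the lower one. -/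

theorem Bool.ite_ne_eq_toNat (a b : Bool) :
    (if a ≠ b then 1 else 0 : ℝ) = a.toNat + b.toNat - 2 * a.toNat * b.toNat := by
  cases a <;> cases b <;> norm_num

theorem mul_one_sub_le_add_sub (p : ℝ) (b : Bool) :
    p * (1 - p) ≤ p + b.toNat - 2 * p * b.toNat := by
  cases b <;> norm_num <;> nlinarith [sq_nonneg p, sq_nonneg (1 - p)]

theorem add_sub_le_two_mul_mul_one_sub {p : ℝ} (hp0 : 0 ≤ p) (hp1 : p ≤ 1) :
    p + (decide (1 ≤ 2 * p)).toNat - 2 * p * (decide (1 ≤ 2 * p)).toNat ≤ 2 * p * (1 - p) := by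
  by_cases h : 1 ≤ 2 * p <;> simp [h] <;> nlinarith

section OrbitMean

variable {M X : Type*} [Group M] [MulAction M X] {H : Subgroup M} [Fintype H]

variable (H) in
noncomputable def orbitMean (φ : X → ℝ) (x : X) : ℝ :=
  (∑ h : H, φ ((h : M) • x)) / Fintype.card H

theorem orbitMean_smul (φ : X → ℝ) {σ : M} (hσ : σ ∈ H) (x : X) :
    orbitMean H φ (σ • x) = orbitMean H φ x := by
  unfold orbitMean
  congr 1
  simp_rw [smul_smul]
  exact Fintype.sum_equiv (Equiv.mulRight ⟨σ, hσ⟩) _ _ fun _ => rfl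

theorem sum_mul_orbitMean [Fintype X] {w : X → ℝ} (hw : ∀ h ∈ H, ∀ x, w (h • x) = w x)
    (φ : X → ℝ) : ∑ x, w x * orbitMean H φ x = ∑ x, w x * φ x := by
  have hshift : ∀ h ∈ H, ∑ x, w x * φ (h • x) = ∑ x, w x * φ x := fun h hh =>
    calc ∑ x, w x * φ (h • x) = ∑ x, w (h • x) * φ (h • x) := by simp_rw [hw h hh]
      _ = ∑ x, w x * φ x := Equiv.sum_comp (MulAction.toPerm h) fun x => w x * φ x
  have hcard : (Fintype.card H : ℝ) ≠ 0 := Nat.cast_ne_zero.2 Fintype.card_ne_zero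
  simp_rw [orbitMean, mul_div_assoc', mul_sum, ← sum_div]
  rw [sum_comm, sum_congr rfl fun (h : H) _ => hshift h h.2, sum_const, card_univ, nsmul_eq_mul,
    mul_div_cancel_left₀ _ hcard]

theorem sum_orbitMean_add_sub_mul [Fintype X] {b : X → ℝ} (hb : ∀ h ∈ H, ∀ x, b (h • x) = b x)
    (φ : X → ℝ) :
    ∑ x, (orbitMean H φ x + b x - 2 * orbitMean H φ x * b x) =
      ∑ x, (φ x + b x - 2 * φ x * b x) := by
  have hw : ∀ h ∈ H, ∀ x, 1 - 2 * b (h • x) = 1 - 2 * b x := fun h hh x => by rw [hb h hh]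
  calc ∑ x, (orbitMean H φ x + b x - 2 * orbitMean H φ x * b x)
      = ∑ x, (1 - 2 * b x) * orbitMean H φ x + ∑ x, b x := by
        rw [← sum_add_distrib]; congr 1; ext x; ring
    _ = ∑ x, (1 - 2 * b x) * φ x + ∑ x, b x := by rw [sum_mul_orbitMean hw]
    _ = ∑ x, (φ x + b x - 2 * φ x * b x) := by
        rw [← sum_add_distrib]; congr 1; ext x; ring

variable (H) in
noncomputable def trueFreq (f : X → Bool) : X → ℝ :=
  orbitMean H fun y => ((f y).toNat : ℝ)

theorem trueFreq_nonneg (f : X → Bool) (x : X) : 0 ≤ trueFreq H f x :=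
  div_nonneg (sum_nonneg fun _ _ => Nat.cast_nonneg _) (Nat.cast_nonneg _)

theorem trueFreq_le_one (f : X → Bool) (x : X) : trueFreq H f x ≤ 1 := by
  refine div_le_one_of_le₀ ?_ (Nat.cast_nonneg _)
  calc ∑ h : H, ((f ((h : M) • x)).toNat : ℝ) ≤ ∑ _h : H, 1 :=
        sum_le_sum fun _ _ => by exact_mod_cast Bool.toNat_le _
    _ = Fintype.card H := by simp

variable (H) in
noncomputable def majority (f : X → Bool) (x : X) : Bool :=
  decide (1 ≤ 2 * trueFreq H f x)

theorem majority_smul (f : X → Bool) {σ : M} (hσ : σ ∈ H) (x : X) :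
    majority H f (σ • x) = majority H f x := by
  rw [majority, majority, trueFreq, orbitMean_smul _ hσ]

variable [Fintype X]

theorem card_ne_eq_sum_trueFreq (f : X → Bool) {g : X → Bool}
    (hg : ∀ h ∈ H, ∀ x, g (h • x) = g x) :
    (#{x | f x ≠ g x} : ℝ) =
      ∑ x, (trueFreq H f x + (g x).toNat - 2 * trueFreq H f x * (g x).toNat) := by
  have hg' : ∀ h ∈ H, ∀ x, ((g (h • x)).toNat : ℝ) = (g x).toNat := fun h hh x => by
    rw [hg h hh]
  rw [card_filter, Nat.cast_sum, trueFreq, sum_orbitMean_add_sub_mul hg']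
  push_cast
  simp_rw [Bool.ite_ne_eq_toNat]

theorem sum_sum_ite_ne_smul (f : X → Bool) :
    ∑ x, ∑ h : H, (if f x ≠ f ((h : M) • x) then 1 else 0 : ℝ) =
      Fintype.card H * ∑ x, 2 * trueFreq H f x * (1 - trueFreq H f x) := by
  have hcard : (Fintype.card H : ℝ) ≠ 0 := Nat.cast_ne_zero.2 Fintype.card_ne_zero
  have inner : ∀ x, ∑ h : H, (if f x ≠ f ((h : M) • x) then 1 else 0 : ℝ) =
      Fintype.card H * ((f x).toNat + trueFreq H f x - 2 * (f x).toNat * trueFreq H f x) := by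
    intro x
    simp_rw [Bool.ite_ne_eq_toNat, trueFreq, orbitMean]
    rw [sum_sub_distrib, sum_add_distrib, sum_const, card_univ, nsmul_eq_mul, ← mul_sum]
    field_simp
  have hp : ∀ h ∈ H, ∀ x, trueFreq H f (h • x) = trueFreq H f x := fun _ hh x =>
    orbitMean_smul _ hh x
  rw [sum_congr rfl fun x _ => inner x, ← mul_sum]
  congr 1
  calc ∑ x, ((f x).toNat + trueFreq H f x - 2 * (f x).toNat * trueFreq H f x)
      = ∑ x, (trueFreq H f x + trueFreq H f x - 2 * trueFreq H f x * trueFreq H f x) :=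
        (sum_orbitMean_add_sub_mul hp _).symm
    _ = ∑ x, 2 * trueFreq H f x * (1 - trueFreq H f x) := by congr 1; ext x; ring

theorem card_mul_card_ne_majority_le (f : X → Bool) :
    Fintype.card H * (#{x | f x ≠ majority H f x} : ℝ) ≤
      ∑ x, ∑ h : H, (if f x ≠ f ((h : M) • x) then 1 else 0 : ℝ) := by
  rw [sum_sum_ite_ne_smul, card_ne_eq_sum_trueFreq f fun _ hh => majority_smul f hh]
  refine mul_le_mul_of_nonneg_left (sum_le_sum fun x _ => ?_) (Nat.cast_nonneg _)
  exact add_sub_le_two_mul_mul_one_sub (trueFreq_nonneg f x) (trueFreq_le_one f x)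

theorem sum_sum_ite_ne_smul_le (f : X → Bool) {g : X → Bool}
    (hg : ∀ h ∈ H, ∀ x, g (h • x) = g x) :
    ∑ x, ∑ h : H, (if f x ≠ f ((h : M) • x) then 1 else 0 : ℝ) ≤
      Fintype.card H * (2 * #{x | f x ≠ g x}) := by
  rw [sum_sum_ite_ne_smul, card_ne_eq_sum_trueFreq f hg, mul_sum _ _ (2 : ℝ)]
  refine mul_le_mul_of_nonneg_left (sum_le_sum fun x _ => ?_) (Nat.cast_nonneg _)
  nlinarith [mul_one_sub_le_add_sub (trueFreq H f x) (g x)]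

end OrbitMean

attribute [local instance] arrowAction

abbrev permsOnSubgroup (J : Finset (Fin n)) : Subgroup (Equiv.Perm (Fin n)) :=
  fixingSubgroup (Equiv.Perm (Fin n)) (J : Set (Fin n))ᶜ

theorem mem_permsOn_iff {J : Finset (Fin n)} {π : Equiv.Perm (Fin n)} :
    π ∈ permsOn J ↔ π ∈ permsOnSubgroup J := by
  simp [permsOn, mem_fixingSubgroup_iff]

instance (J : Finset (Fin n)) : Fintype (permsOnSubgroup J) :=
  Fintype.subtype (permsOn J) fun _ => mem_permsOn_iff

theorem permApply_eq_smul (π : Equiv.Perm (Fin n)) (x : Fin n → Bool) : permApply π x = π • x :=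
  rfl

theorem jSymmetric_iff {g : (Fin n → Bool) → Bool} {J : Finset (Fin n)} :
    JSymmetric g J ↔ ∀ π ∈ permsOnSubgroup J, ∀ x, g (π • x) = g x := by
  simp only [JSymmetric, mem_permsOn_iff, permApply_eq_smul]
  exact ⟨fun h π hπ x => h x π hπ, fun h x π hπ => h π hπ x⟩

theorem symInf_eq_sum (f : (Fin n → Bool) → Bool) (J : Finset (Fin n)) :
    SymInf f J = (∑ x, ∑ π : permsOnSubgroup J,
        (if f x ≠ f ((π : Equiv.Perm (Fin n)) • x) then 1 else 0 : ℝ)) /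
      (Fintype.card (permsOnSubgroup J) * 2 ^ n) := by
  rw [SymInf, card_filter, Nat.cast_sum, sum_product, mul_comm,
    Fintype.card_of_subtype _ fun _ => mem_permsOn_iff]
  congr 1
  refine sum_congr rfl fun x _ => ?_
  rw [sum_subtype _ fun _ => mem_permsOn_iff]
  push_cast
  rfl

/-- the symmetric influence of `J` is within a factor `2` of the
distance from `f` to the closest `J`-symmetric function. -/
theorem symInf_vs_dist_to_closest_Jsymmetric (n : ℕ)
    (f fJ : (Fin n → Bool) → Bool) (J : Finset (Fin n))
    (hsymm : JSymmetric fJ J)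
    (hclosest : ∀ g : (Fin n → Bool) → Bool, JSymmetric g J → hdist f fJ ≤ hdist f g) :
    hdist f fJ ≤ SymInf f J ∧ SymInf f J ≤ 2 * hdist f fJ := by
  have hcard : (0 : ℝ) < Fintype.card (permsOnSubgroup J) := Nat.cast_pos.2 Fintype.card_pos
  rw [symInf_eq_sum]
  constructor
  · calc hdist f fJ ≤ hdist f (majority (permsOnSubgroup J) f) :=
          hclosest _ (jSymmetric_iff.2 fun _ hπ x => majority_smul f hπ x)
      _ = Fintype.card (permsOnSubgroup J) * #{x | f x ≠ majority (permsOnSubgroup J) f x} /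
            (Fintype.card (permsOnSubgroup J) * 2 ^ n) := by
          rw [hdist, mul_div_mul_left _ _ hcard.ne']
      _ ≤ _ := by gcongr; exact card_mul_card_ne_majority_le f
  · calc _ ≤ (Fintype.card (permsOnSubgroup J) * (2 * #{x | f x ≠ fJ x}) /
            (Fintype.card (permsOnSubgroup J) * 2 ^ n) : ℝ) := by
          gcongr; exact sum_sum_ite_ne_smul_le f (jSymmetric_iff.1 hsymm)
      _ = 2 * hdist f fJ := by rw [mul_div_mul_left _ _ hcard.ne', hdist, mul_div_assoc]
end

section
/- Symmetric influence is monotone: for every f: {0,1}^n → {0,1} and sets J ⊆ K ⊆ [n], SymInf_f(J) ≤ SymInf_f(K). -/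
open Finset

variable {n : ℕ}

section SymInfAux

lemma mem_permsOn {J : Finset (Fin n)} {π : Equiv.Perm (Fin n)} :
    π ∈ permsOn J ↔ ∀ i ∉ J, π i = i := by
  simp [permsOn]

lemma one_mem_permsOn (J : Finset (Fin n)) : 1 ∈ permsOn J := by
  simp [mem_permsOn]

lemma permsOn_card_pos (J : Finset (Fin n)) : 0 < (permsOn J).card :=
  card_pos.2 ⟨1, one_mem_permsOn J⟩

lemma mul_mem_permsOn {J : Finset (Fin n)} {π σ : Equiv.Perm (Fin n)}
    (hπ : π ∈ permsOn J) (hσ : σ ∈ permsOn J) : π * σ ∈ permsOn J := by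
  rw [mem_permsOn] at *
  intro i hi
  simp [Equiv.Perm.mul_apply, hσ i hi, hπ i hi]

lemma inv_mem_permsOn {J : Finset (Fin n)} {π : Equiv.Perm (Fin n)}
    (hπ : π ∈ permsOn J) : π⁻¹ ∈ permsOn J := by
  rw [mem_permsOn] at *
  intro i hi
  conv_lhs => rw [← hπ i hi]
  simp

lemma permsOn_mono {J K : Finset (Fin n)} (h : J ⊆ K) : permsOn J ⊆ permsOn K := by
  intro π hπ
  rw [mem_permsOn] at *
  exact fun i hi => hπ i (fun hiJ => hi (h hiJ))

lemma permApply_mul (π σ : Equiv.Perm (Fin n)) (x : Fin n → Bool) :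
    permApply (π * σ) x = permApply π (permApply σ x) := rfl

lemma permApply_one (x : Fin n → Bool) : permApply 1 x = x := rfl

def permEquiv (σ : Equiv.Perm (Fin n)) : (Fin n → Bool) ≃ (Fin n → Bool) where
  toFun := permApply σ
  invFun := permApply σ⁻¹
  left_inv := fun x => by rw [← permApply_mul, inv_mul_cancel, permApply_one]
  right_inv := fun x => by rw [← permApply_mul, mul_inv_cancel, permApply_one]

/-- number of perms in `permsOn L` sending `x` to an `f`-value `b`. -/
def cnt (f : (Fin n → Bool) → Bool) (L : Finset (Fin n)) (b : Bool) (x : Fin n → Bool) : ℕ :=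
  ((permsOn L).filter (fun π => f (permApply π x) = b)).card

lemma cnt_true_add_false (f : (Fin n → Bool) → Bool) (L : Finset (Fin n)) (x : Fin n → Bool) :
    cnt f L true x + cnt f L false x = (permsOn L).card := by
  classical
  have h : (permsOn L).filter (fun π => f (permApply π x) = false)
      = (permsOn L).filter (fun π => ¬ f (permApply π x) = true) := by
    apply Finset.filter_congr
    intro π _
    simp
  rw [cnt, cnt, h, Finset.card_filter_add_card_filter_not]


lemma cnt_le (f : (Fin n → Bool) → Bool) (L : Finset (Fin n)) (b : Bool) (x : Fin n → Bool) :
    cnt f L b x ≤ (permsOn L).card :=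
  Finset.card_filter_le _ _

/-- invariance of `cnt` under the action of a permutation in the group. -/
lemma cnt_permApply (f : (Fin n → Bool) → Bool) (L : Finset (Fin n)) {σ : Equiv.Perm (Fin n)}
    (hσ : σ ∈ permsOn L) (b : Bool) (x : Fin n → Bool) :
    cnt f L b (permApply σ x) = cnt f L b x := by
  classical
  rw [cnt, cnt]
  apply Finset.card_bij' (fun π _ => π * σ) (fun ρ _ => ρ * σ⁻¹)
  · intro π hπ
    rw [mem_filter] at hπ ⊢
    refine ⟨mul_mem_permsOn hπ.1 hσ, ?_⟩
    rw [permApply_mul]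
    exact hπ.2
  · intro ρ hρ
    rw [mem_filter] at hρ ⊢
    refine ⟨mul_mem_permsOn hρ.1 (inv_mem_permsOn hσ), ?_⟩
    rw [← permApply_mul]
    have h2 : ρ * σ⁻¹ * σ = ρ := by group
    rw [h2]
    exact hρ.2
  · intro π _
    group
  · intro ρ _
    group

/-- Key double counting: summing `cnt` for `J` over the `K`-orbit. -/
lemma sum_cnt (f : (Fin n → Bool) → Bool) {J K : Finset (Fin n)} (hJK : J ⊆ K)
    (b : Bool) (x : Fin n → Bool) :
    ∑ σ ∈ permsOn K, cnt f J b (permApply σ x) = (permsOn J).card * cnt f K b x := by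
  classical
  have hrw : ∀ σ ∈ permsOn K, cnt f J b (permApply σ x)
      = ∑ π ∈ permsOn J, (if f (permApply (π * σ) x) = b then 1 else 0) := by
    intro σ _
    rw [cnt, Finset.card_filter]
    exact Finset.sum_congr rfl fun π _ => by rw [permApply_mul]
  rw [Finset.sum_congr rfl hrw, Finset.sum_comm]
  rw [Finset.sum_congr rfl (fun π hπ => ?_), Finset.sum_const, smul_eq_mul]
  have hπK : π ∈ permsOn K := permsOn_mono hJK hπ
  rw [cnt, Finset.card_filter]
  apply Finset.sum_nbij' (fun σ => π * σ) (fun τ => π⁻¹ * τ)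
  · intro σ hσ
    exact mul_mem_permsOn hπK hσ
  · intro τ hτ
    exact mul_mem_permsOn (inv_mem_permsOn hπK) hτ
  · intro σ _
    group
  · intro τ _
    group
  · intro σ _
    rfl


lemma numerator_eq (f : (Fin n → Bool) → Bool) (L : Finset (Fin n)) :
    ((Finset.univ ×ˢ permsOn L).filter (fun p : (Fin n → Bool) × Equiv.Perm (Fin n) =>
      f p.1 ≠ f (permApply p.2 p.1))).card
      = ∑ x : Fin n → Bool, cnt f L (!(f x)) x := by
  classical
  rw [Finset.card_filter, Finset.sum_product]
  refine Finset.sum_congr rfl fun x _ => ?_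
  rw [cnt, Finset.card_filter]
  refine Finset.sum_congr rfl fun π _ => ?_
  have h : (f x ≠ f (permApply π x)) ↔ (f (permApply π x) = !(f x)) := by
    cases h1 : f x <;> cases h2 : f (permApply π x) <;> simp
  simp only [h]

lemma claimB (f : (Fin n → Bool) → Bool) (L : Finset (Fin n)) (x : Fin n → Bool) :
    ∑ σ ∈ permsOn L, cnt f L (!(f (permApply σ x))) x
      = 2 * (cnt f L true x * cnt f L false x) := by
  classical
  rw [← Finset.sum_filter_add_sum_filter_not (permsOn L) (fun σ => f (permApply σ x) = true)]
  have h1 : ∀ σ ∈ (permsOn L).filter (fun σ => f (permApply σ x) = true),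
      cnt f L (!(f (permApply σ x))) x = cnt f L false x := by
    intro σ hσ
    rw [Finset.mem_filter] at hσ
    rw [hσ.2, Bool.not_true]
  have h2 : ∀ σ ∈ (permsOn L).filter (fun σ => ¬ f (permApply σ x) = true),
      cnt f L (!(f (permApply σ x))) x = cnt f L true x := by
    intro σ hσ
    rw [Finset.mem_filter] at hσ
    have hb : f (permApply σ x) = false := by simpa using hσ.2
    rw [hb, Bool.not_false]
  rw [Finset.sum_congr rfl h1, Finset.sum_congr rfl h2, Finset.sum_const, Finset.sum_const,
    smul_eq_mul, smul_eq_mul]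
  have hfilt : ((permsOn L).filter (fun σ => ¬ f (permApply σ x) = true)).card
      = cnt f L false x := by
    rw [cnt]
    congr 1
    apply Finset.filter_congr
    intro _ _
    simp
  have hfilt2 : ((permsOn L).filter (fun σ => f (permApply σ x) = true)).card
      = cnt f L true x := rfl
  rw [hfilt, hfilt2]
  ring

lemma claimA (f : (Fin n → Bool) → Bool) (L : Finset (Fin n)) :
    ∑ σ ∈ permsOn L, ∑ x : Fin n → Bool, cnt f L (!(f (permApply σ x))) x
      = (permsOn L).card * ∑ x : Fin n → Bool, cnt f L (!(f x)) x := by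
  classical
  have key : ∀ σ ∈ permsOn L, ∑ x : Fin n → Bool, cnt f L (!(f (permApply σ x))) x
      = ∑ x : Fin n → Bool, cnt f L (!(f x)) x := by
    intro σ hσ
    refine ((Equiv.sum_comp (permEquiv σ⁻¹)
      (fun y => cnt f L (!(f (permApply σ y))) y)).symm).trans ?_
    refine Finset.sum_congr rfl fun x _ => ?_
    have h1 : permApply σ ((permEquiv σ⁻¹) x) = x := by
      show permApply σ (permApply σ⁻¹ x) = x
      rw [← permApply_mul, mul_inv_cancel, permApply_one]
    show cnt f L (!(f (permApply σ (permApply σ⁻¹ x)))) (permApply σ⁻¹ x)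
        = cnt f L (!(f x)) x
    rw [show permApply σ (permApply σ⁻¹ x) = x from h1]
    exact cnt_permApply f L (inv_mem_permsOn hσ) _ x
  rw [Finset.sum_congr rfl key, Finset.sum_const, smul_eq_mul]

lemma main_nat (f : (Fin n → Bool) → Bool) (L : Finset (Fin n)) :
    (permsOn L).card * ∑ x : Fin n → Bool, cnt f L (!(f x)) x
      = ∑ x : Fin n → Bool, 2 * (cnt f L true x * cnt f L false x) := by
  classical
  rw [← claimA]
  rw [Finset.sum_comm]
  exact Finset.sum_congr rfl fun x _ => claimB f L x


lemma perx (f : (Fin n → Bool) → Bool) {J K : Finset (Fin n)} (hJK : J ⊆ K) (x : Fin n → Bool) :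
    ((permsOn K).card : ℝ) * ∑ σ ∈ permsOn K,
        ((cnt f J true (permApply σ x) : ℝ) * (cnt f J false (permApply σ x) : ℝ))
      ≤ ((permsOn J).card : ℝ)^2 * ((cnt f K true x : ℝ) * (cnt f K false x : ℝ)) := by
  classical
  have hpt : ∀ σ ∈ permsOn K, (cnt f J false (permApply σ x) : ℝ)
      = ((permsOn J).card : ℝ) - (cnt f J true (permApply σ x) : ℝ) := by
    intro σ _
    have h : (cnt f J true (permApply σ x) : ℝ) + (cnt f J false (permApply σ x) : ℝ)
        = ((permsOn J).card : ℝ) := by exact_mod_cast cnt_true_add_false f J (permApply σ x)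
    linarith
  have hT : ∑ σ ∈ permsOn K, (cnt f J true (permApply σ x) : ℝ)
      = ((permsOn J).card : ℝ) * (cnt f K true x : ℝ) := by
    exact_mod_cast sum_cnt f hJK true x
  have hU : ∑ σ ∈ permsOn K, (cnt f J false (permApply σ x) : ℝ)
      = ((permsOn J).card : ℝ) * (cnt f K false x : ℝ) := by
    exact_mod_cast sum_cnt f hJK false x
  have hUeq : ((permsOn J).card : ℝ) * (cnt f K false x : ℝ)
      = ((permsOn K).card : ℝ) * ((permsOn J).card : ℝ)
        - ((permsOn J).card : ℝ) * (cnt f K true x : ℝ) := by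
    rw [← hU, ← hT, Finset.sum_congr rfl hpt, Finset.sum_sub_distrib, Finset.sum_const,
      nsmul_eq_mul]
  have hcs : (∑ σ ∈ permsOn K, (cnt f J true (permApply σ x) : ℝ))^2
      ≤ ((permsOn K).card : ℝ) * ∑ σ ∈ permsOn K, (cnt f J true (permApply σ x) : ℝ)^2 :=
    sq_sum_le_card_mul_sum_sq
  rw [hT] at hcs
  have hsum : (∑ σ ∈ permsOn K,
        ((cnt f J true (permApply σ x) : ℝ) * (cnt f J false (permApply σ x) : ℝ)))
      = (∑ σ ∈ permsOn K, ((cnt f J true (permApply σ x) : ℝ) * ((permsOn J).card : ℝ)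
          - (cnt f J true (permApply σ x) : ℝ)^2)) :=
    Finset.sum_congr rfl fun σ hσ => by rw [hpt σ hσ]; ring
  rw [hsum, Finset.sum_sub_distrib, ← Finset.sum_mul, hT]
  have hrw : ((permsOn J).card : ℝ)^2 * ((cnt f K true x : ℝ) * (cnt f K false x : ℝ))
      = (((permsOn J).card : ℝ) * (cnt f K true x : ℝ))
        * (((permsOn J).card : ℝ) * (cnt f K false x : ℝ)) := by ring
  rw [hrw, hUeq]
  nlinarith [hcs]

/-- reindexing a sum over all inputs by a permutation action. -/
lemma sum_reindex (g : (Fin n → Bool) → ℝ) (σ : Equiv.Perm (Fin n)) :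
    ∑ x : Fin n → Bool, g (permApply σ x) = ∑ x : Fin n → Bool, g x :=
  Equiv.sum_comp (permEquiv σ) g

theorem symInf_monotone' (f : (Fin n → Bool) → Bool)
    (J K : Finset (Fin n)) (hJK : J ⊆ K) :
    SymInf f J ≤ SymInf f K := by
  classical
  have hmJ : (0:ℝ) < ((permsOn J).card : ℝ) := by exact_mod_cast permsOn_card_pos J
  have hmK : (0:ℝ) < ((permsOn K).card : ℝ) := by exact_mod_cast permsOn_card_pos K
  have h2n : (0:ℝ) < (2^n : ℝ) := by positivity
  rw [SymInf, SymInf, div_le_div_iff₀ (by positivity) (by positivity),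
    numerator_eq f J, numerator_eq f K]
  set mJ : ℝ := ((permsOn J).card : ℝ) with hmJdef
  set mK : ℝ := ((permsOn K).card : ℝ) with hmKdef
  set NJ : ℝ := ((∑ x : Fin n → Bool, cnt f J (!(f x)) x : ℕ) : ℝ) with hNJdef
  set NK : ℝ := ((∑ x : Fin n → Bool, cnt f K (!(f x)) x : ℕ) : ℝ) with hNKdef
  have hJeq : mJ * NJ = ∑ x : Fin n → Bool,
      2 * ((cnt f J true x : ℝ) * (cnt f J false x : ℝ)) := by
    rw [hmJdef, hNJdef]
    exact_mod_cast main_nat f J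
  have hKeq : mK * NK = ∑ x : Fin n → Bool,
      2 * ((cnt f K true x : ℝ) * (cnt f K false x : ℝ)) := by
    rw [hmKdef, hNKdef]
    exact_mod_cast main_nat f K
  -- double sum identity
  have hds : ∑ x : Fin n → Bool, ∑ σ ∈ permsOn K,
        ((cnt f J true (permApply σ x) : ℝ) * (cnt f J false (permApply σ x) : ℝ))
      = mK * ∑ x : Fin n → Bool, ((cnt f J true x : ℝ) * (cnt f J false x : ℝ)) := by
    rw [Finset.sum_comm]
    rw [Finset.sum_congr rfl (fun σ _ => sum_reindex
      (fun y => ((cnt f J true y : ℝ) * (cnt f J false y : ℝ))) σ)]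
    rw [Finset.sum_const, nsmul_eq_mul]
  -- summed per-x inequality
  have hsummed : mK * ∑ x : Fin n → Bool, ∑ σ ∈ permsOn K,
        ((cnt f J true (permApply σ x) : ℝ) * (cnt f J false (permApply σ x) : ℝ))
      ≤ mJ^2 * ∑ x : Fin n → Bool, ((cnt f K true x : ℝ) * (cnt f K false x : ℝ)) := by
    rw [Finset.mul_sum, Finset.mul_sum]
    exact Finset.sum_le_sum fun x _ => perx f hJK x
  rw [hds] at hsummed
  -- now: mK^2 * Σ TJ*UJ ≤ mJ^2 * Σ TK*UK  (after mult. assoc)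
  have hfin : mK * NJ * (mJ * mK) ≤ mJ * NK * (mJ * mK) := by
    have e1 : ∑ x : Fin n → Bool, ((cnt f J true x : ℝ) * (cnt f J false x : ℝ))
        = mJ * NJ / 2 := by
      rw [hJeq, eq_div_iff (by norm_num : (2:ℝ) ≠ 0), Finset.sum_mul]
      exact Finset.sum_congr rfl fun x _ => by ring
    have e2 : ∑ x : Fin n → Bool, ((cnt f K true x : ℝ) * (cnt f K false x : ℝ))
        = mK * NK / 2 := by
      rw [hKeq, eq_div_iff (by norm_num : (2:ℝ) ≠ 0), Finset.sum_mul]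
      exact Finset.sum_congr rfl fun x _ => by ring
    rw [e1, e2] at hsummed
    nlinarith [hsummed]
  have hkey : mK * NJ ≤ mJ * NK := le_of_mul_le_mul_right hfin (by positivity)
  nlinarith [hkey, h2n]


end SymInfAux

/-- monotonicity of symmetric influence. -/
theorem symInf_monotone (n : ℕ) (f : (Fin n → Bool) → Bool)
    (J K : Finset (Fin n)) (hJK : J ⊆ K) :
    SymInf f J ≤ SymInf f K := by
  exact symInf_monotone' f J K hJK
end

section
/- Let 0 < p < 1 and 0 < δ < 1-p, and set τ = δ·√((n+2)/(2p(1-p))). If τ < 1, then the total variation distance between the binomial distributions B(n, p) and B(n, p+δ) is at most (√e/2)·τ/(1-τ)². -/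
/-- The binomial pmf with `n` trials and success probability `p`. -/
noncomputable def binPMF (n : ℕ) (p : ℝ) (k : ℕ) : ℝ :=
  (n.choose k : ℝ) * p ^ k * (1 - p) ^ (n - k)

lemma binPMF_pos (n : ℕ) (p : ℝ) (hp : 0 < p) (hp1 : p < 1) {k : ℕ} (hk : k ≤ n) :
    0 < binPMF n p k := by
  have hc : (0:ℝ) < (n.choose k : ℝ) := by exact_mod_cast Nat.choose_pos hk
  have h1p : (0:ℝ) < 1 - p := by linarith
  unfold binPMF
  positivity

lemma sum_binPMF (n : ℕ) (p : ℝ) :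
    ∑ k ∈ Finset.range (n + 1), binPMF n p k = 1 := by
  calc ∑ k ∈ Finset.range (n+1), binPMF n p k
      = ∑ k ∈ Finset.range (n+1), p ^ k * (1-p) ^ (n-k) * (n.choose k : ℝ) := by
        refine Finset.sum_congr rfl fun k _ => ?_; unfold binPMF; ring
    _ = (p + (1-p)) ^ n := (add_pow p (1-p) n).symm
    _ = 1 := by norm_num

lemma sum_sq_div (n : ℕ) (p q : ℝ) (hp : 0 < p) (hp1 : p < 1) :
    ∑ k ∈ Finset.range (n + 1), (binPMF n q k)^2 / binPMF n p k
      = (q^2/p + (1-q)^2/(1-p)) ^ n := by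
  have h1p : (0:ℝ) < 1 - p := by linarith
  calc ∑ k ∈ Finset.range (n+1), (binPMF n q k)^2 / binPMF n p k
      = ∑ k ∈ Finset.range (n+1), (q^2/p)^k * ((1-q)^2/(1-p))^(n-k) * (n.choose k : ℝ) := by
        refine Finset.sum_congr rfl fun k hk => ?_
        have hk' : k ≤ n := Nat.lt_succ_iff.mp (Finset.mem_range.mp hk)
        have hc : (n.choose k : ℝ) ≠ 0 := by
          have : (0:ℝ) < (n.choose k : ℝ) := by exact_mod_cast Nat.choose_pos hk'
          exact ne_of_gt this
        have hpk : p ^ k ≠ 0 := pow_ne_zero _ (ne_of_gt hp)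
        have h1pk : (1-p) ^ (n-k) ≠ 0 := pow_ne_zero _ (ne_of_gt h1p)
        unfold binPMF
        rw [div_pow, div_pow, pow_right_comm q 2 k, pow_right_comm (1-q) 2 (n-k)]
        field_simp
    _ = (q^2/p + (1-q)^2/(1-p)) ^ n := (add_pow _ _ n).symm

lemma exp_sub_one_le (X : ℝ) : Real.exp X - 1 ≤ X * Real.exp X := by
  have h := Real.add_one_le_exp (-X)
  have hpos := Real.exp_pos X
  have hmul : Real.exp (-X) * Real.exp X = 1 := by
    rw [← Real.exp_add]; simp
  nlinarith [mul_le_mul_of_nonneg_right h hpos.le]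

/-- TV distance between `B(n,p)` and `B(n,p+δ)`. -/
theorem tv_binomial_shift_le (n : ℕ) (p δ : ℝ) (hp : 0 < p) (hp1 : p < 1)
    (hδ : 0 < δ) (hδ1 : δ < 1 - p)
    (τ : ℝ) (hτdef : τ = δ * Real.sqrt ((n + 2) / (2 * p * (1 - p))))
    (hτ : τ < 1) :
    (1 / 2) * ∑ k ∈ Finset.range (n + 1),
        |binPMF n p k - binPMF n (p + δ) k| ≤
      (Real.sqrt (Real.exp 1) / 2) * τ / (1 - τ) ^ 2 := by
  have h1p : (0:ℝ) < 1 - p := by linarith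
  set q : ℝ := p + δ with hq
  have hq0 : 0 < q := by positivity
  have hq1 : q < 1 := by simp only [hq]; linarith
  have h1τ : (0:ℝ) < 1 - τ := by linarith
  have hτ0 : 0 ≤ τ := by
    rw [hτdef]; positivity
  -- abbreviations
  set S : ℝ := ∑ k ∈ Finset.range (n + 1), |binPMF n p k - binPMF n q k| with hS
  have hS0 : 0 ≤ S := Finset.sum_nonneg fun k _ => abs_nonneg _
  set ε : ℝ := δ^2 / (p * (1 - p)) with hε
  have hε0 : 0 < ε := by positivity
  -- τ² = ε * (n+2) / 2
  have hτsq : τ^2 = ε * (n + 2) / 2 := by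
    have hA : (0:ℝ) ≤ ((n:ℝ) + 2) / (2 * p * (1 - p)) := by positivity
    rw [hτdef, mul_pow, Real.sq_sqrt hA, hε]
    field_simp
  have hnε : (n:ℝ) * ε ≤ 2 * τ^2 := by
    rw [hτsq]
    have : (n:ℝ) ≤ (n:ℝ) + 2 := by linarith
    calc (n:ℝ) * ε ≤ ((n:ℝ) + 2) * ε := by nlinarith
      _ = 2 * (ε * (n+2) / 2) := by ring
  -- Cauchy-Schwarz: S^2 ≤ χ²
  have hCS : S^2 ≤ ∑ k ∈ Finset.range (n + 1),
      (binPMF n q k - binPMF n p k)^2 / binPMF n p k := by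
    have key := Finset.sum_mul_sq_le_sq_mul_sq (Finset.range (n+1))
      (fun k => |binPMF n p k - binPMF n q k| / Real.sqrt (binPMF n p k))
      (fun k => Real.sqrt (binPMF n p k))
    have h1 : ∑ k ∈ Finset.range (n+1),
        |binPMF n p k - binPMF n q k| / Real.sqrt (binPMF n p k) * Real.sqrt (binPMF n p k)
        = S := by
      refine Finset.sum_congr rfl fun k hk => ?_
      have hk' : k ≤ n := Nat.lt_succ_iff.mp (Finset.mem_range.mp hk)
      have hpos := binPMF_pos n p hp hp1 hk'
      have hs : Real.sqrt (binPMF n p k) ≠ 0 := by positivity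
      field_simp
    have h2 : ∑ k ∈ Finset.range (n+1),
        (|binPMF n p k - binPMF n q k| / Real.sqrt (binPMF n p k))^2
        = ∑ k ∈ Finset.range (n + 1),
          (binPMF n q k - binPMF n p k)^2 / binPMF n p k := by
      refine Finset.sum_congr rfl fun k hk => ?_
      have hk' : k ≤ n := Nat.lt_succ_iff.mp (Finset.mem_range.mp hk)
      have hpos := binPMF_pos n p hp hp1 hk'
      rw [div_pow, sq_abs, Real.sq_sqrt hpos.le]
      rw [show binPMF n p k - binPMF n q k = -(binPMF n q k - binPMF n p k) by ring, neg_sq]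
    have h3 : ∑ k ∈ Finset.range (n+1), (Real.sqrt (binPMF n p k))^2 = 1 := by
      rw [show ∑ k ∈ Finset.range (n+1), (Real.sqrt (binPMF n p k))^2
          = ∑ k ∈ Finset.range (n+1), binPMF n p k from
        Finset.sum_congr rfl fun k hk => Real.sq_sqrt
          (binPMF_pos n p hp hp1 (Nat.lt_succ_iff.mp (Finset.mem_range.mp hk))).le]
      exact sum_binPMF n p
    rw [h1, h2, h3] at key
    simpa using key
  -- χ² = (1+ε)^n - 1
  have hchi : ∑ k ∈ Finset.range (n + 1),
      (binPMF n q k - binPMF n p k)^2 / binPMF n p k = (1 + ε)^n - 1 := by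
    have hterm : ∀ k ∈ Finset.range (n+1),
        (binPMF n q k - binPMF n p k)^2 / binPMF n p k
        = (binPMF n q k)^2 / binPMF n p k - 2 * binPMF n q k + binPMF n p k := by
      intro k hk
      have hk' : k ≤ n := Nat.lt_succ_iff.mp (Finset.mem_range.mp hk)
      have hpos := binPMF_pos n p hp hp1 hk'
      field_simp
      ring
    rw [Finset.sum_congr rfl hterm]
    rw [Finset.sum_add_distrib, Finset.sum_sub_distrib, ← Finset.mul_sum]
    rw [sum_binPMF, sum_binPMF, sum_sq_div n p q hp hp1]
    have hkey : q^2/p + (1-q)^2/(1-p) = 1 + ε := by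
      rw [hε, hq]
      field_simp
      ring
    rw [hkey]; ring
  -- (1+ε)^n ≤ exp(n ε)
  have hpow : (1 + ε)^n ≤ Real.exp ((n:ℝ) * ε) := by
    have h1 : 1 + ε ≤ Real.exp ε := by
      have := Real.add_one_le_exp ε; linarith
    calc (1 + ε)^n ≤ (Real.exp ε)^n := by
          exact pow_le_pow_left₀ (by positivity) h1 n
      _ = Real.exp ((n:ℝ) * ε) := by rw [← Real.exp_nat_mul]
  -- exp(nε) - 1 ≤ nε exp(nε) ≤ 2τ² exp(2τ²)
  have hmono : (n:ℝ) * ε * Real.exp ((n:ℝ) * ε) ≤ 2 * τ^2 * Real.exp (2 * τ^2) := by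
    have h0 : (0:ℝ) ≤ (n:ℝ) * ε := by positivity
    exact mul_le_mul hnε (Real.exp_le_exp.2 hnε) (Real.exp_pos _).le (by positivity)
  -- exp(2τ²) ≤ 1/(1-τ)^4
  have hexpτ : Real.exp (2 * τ^2) ≤ ((1 - τ)^4)⁻¹ := by
    have hlog : Real.log (1 - τ) ≤ -τ := by
      have := Real.log_le_sub_one_of_pos h1τ; linarith
    have h2 : 2 * τ^2 ≤ -(4 * Real.log (1 - τ)) := by nlinarith
    calc Real.exp (2 * τ^2) ≤ Real.exp (-(4 * Real.log (1 - τ))) := Real.exp_le_exp.2 h2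
      _ = ((1 - τ)^4)⁻¹ := by
          rw [Real.exp_neg, show (4:ℝ) * Real.log (1-τ) = ((4:ℕ):ℝ) * Real.log (1-τ) by norm_num,
            Real.exp_nat_mul, Real.exp_log h1τ]
  have h2e : (2:ℝ) ≤ Real.exp 1 := by
    have := Real.add_one_le_exp 1; linarith
  -- put it together: S² ≤ e τ² / (1-τ)^4
  have hfinal : S^2 ≤ Real.exp 1 * τ^2 / (1-τ)^4 := by
    have c1 : S^2 ≤ (1 + ε)^n - 1 := by rw [← hchi]; exact hCS
    have c2 : (1 + ε)^n - 1 ≤ (n:ℝ) * ε * Real.exp ((n:ℝ) * ε) := by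
      have := exp_sub_one_le ((n:ℝ) * ε)
      linarith
    have c3 : 2 * τ^2 * Real.exp (2 * τ^2) ≤ 2 * τ^2 * ((1 - τ)^4)⁻¹ := by
      have h0 : (0:ℝ) ≤ 2 * τ^2 := by positivity
      exact mul_le_mul_of_nonneg_left hexpτ h0
    have c4 : 2 * τ^2 * ((1 - τ)^4)⁻¹ ≤ Real.exp 1 * τ^2 / (1-τ)^4 := by
      rw [div_eq_mul_inv]
      have h0 : (0:ℝ) ≤ τ^2 * ((1 - τ)^4)⁻¹ := by positivity
      nlinarith
    linarith
  -- conclude by taking square roots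
  have hRHS0 : 0 ≤ Real.sqrt (Real.exp 1) / 2 * τ / (1 - τ) ^ 2 := by positivity
  have hLHS0 : 0 ≤ (1:ℝ)/2 * S := by positivity
  have hsq : ((1:ℝ)/2 * S)^2 ≤ (Real.sqrt (Real.exp 1) / 2 * τ / (1 - τ) ^ 2)^2 := by
    have he : (Real.sqrt (Real.exp 1))^2 = Real.exp 1 := Real.sq_sqrt (Real.exp_pos 1).le
    have hrw : (Real.sqrt (Real.exp 1) / 2 * τ / (1 - τ) ^ 2)^2
        = Real.exp 1 * τ^2 / (1-τ)^4 / 4 := by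
      rw [div_pow _ ((1-τ)^2) 2, mul_pow, div_pow (Real.sqrt (Real.exp 1)) 2 2, he]
      ring
    rw [hrw]
    have hhalf : ((1:ℝ)/2 * S)^2 = S^2 / 4 := by ring
    rw [hhalf]
    linarith [hfinal]
  calc (1:ℝ)/2 * S = Real.sqrt (((1:ℝ)/2 * S)^2) := (Real.sqrt_sq hLHS0).symm
    _ ≤ Real.sqrt ((Real.sqrt (Real.exp 1) / 2 * τ / (1 - τ) ^ 2)^2) := Real.sqrt_le_sqrt hsq
    _ = Real.sqrt (Real.exp 1) / 2 * τ / (1 - τ) ^ 2 := Real.sqrt_sq hRHS0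
end

section
/- If f: {0,1}^n → {0,1} is ε-far from being (n-k)-symmetric, then the family F = {J ⊆ [n] : SymInf_f([n]\J) < ε/3 and all pairwise unions of complements satisfy the weak sub-additivity error at most ε/9} restricted to sets of size at most 5kn/r (with r ≥ c·k²/ε² so that c√(5k/r) ≤ ε/9) is (k+1)-intersecting: any J, K in F satisfy |J ∩ K| > k. -/
open Finset

variable {n : ℕ}

/-- if `f` is `ε`-far from `(n-k)`-symmetric, then sets of size at most
`5kn/r` whose complement has symmetric influence below `ε/3` pairwise intersect in more
than `k` elements (i.e. the family is `(k+1)`-intersecting), provided the weak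
sub-additivity constant `c` satisfies `c·√(5k/r) ≤ ε/9`. -/
theorem psf_low_symInf_family_intersecting (n k r : ℕ) (ε c : ℝ)
    (f : (Fin n → Bool) → Bool)
    (hε : 0 < ε) (hc : 0 < c) (hk : 0 < k) (hr : 5 * k < r)
    (hsub : ∀ (A B : Finset (Fin n)) (γ : ℝ), 0 < γ → γ < 1 →
      (1 - γ) * n ≤ A.card → (1 - γ) * n ≤ B.card →
      SymInf f (A ∪ B) ≤ SymInf f A + SymInf f B + c * Real.sqrt γ)
    (hfar : ∀ S : Finset (Fin n), S.card ≤ k → ε ≤ SymInf f Sᶜ)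
    (hcr : c * Real.sqrt (5 * k / r) ≤ ε / 9)
    (J K : Finset (Fin n))
    (hJsize : (J.card : ℝ) ≤ 5 * k * n / r) (hKsize : (K.card : ℝ) ≤ 5 * k * n / r)
    (hJ : SymInf f Jᶜ < ε / 3) (hK : SymInf f Kᶜ < ε / 3) :
    k < (J ∩ K).card := by
  by_contra hle
  push_neg at hle
  have hfarJK := hfar (J ∩ K) hle
  have hr0 : (0:ℝ) < (r:ℝ) := by
    have : 0 < r := lt_of_le_of_lt (Nat.zero_le _) hr
    exact_mod_cast this
  set γ : ℝ := 5 * k / r with hγdef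
  have hγ0 : 0 < γ := by
    have hk' : (0:ℝ) < (k:ℝ) := by exact_mod_cast hk
    positivity
  have hγ1 : γ < 1 := by
    rw [hγdef, div_lt_one hr0]
    have : (5 * k : ℕ) < r := hr
    exact_mod_cast this
  have hcard : ∀ S : Finset (Fin n), (S.card : ℝ) ≤ 5 * k * n / r →
      (1 - γ) * n ≤ (Sᶜ.card : ℝ) := by
    intro S hS
    have h1 : (Sᶜ.card : ℝ) = n - S.card := by
      have := Finset.card_compl S
      have h2 : S.card ≤ n := by
        simpa using Finset.card_le_card (Finset.subset_univ S)
      rw [this]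
      simp [Nat.cast_sub h2]
    rw [h1]
    have : (5:ℝ) * k * n / r = γ * n := by
      rw [hγdef]; ring
    nlinarith [hS]
  have hsubJK := hsub Jᶜ Kᶜ γ hγ0 hγ1 (hcard J hJsize) (hcard K hKsize)
  have hcompl : (J ∩ K)ᶜ = Jᶜ ∪ Kᶜ := by
    ext i; simp [not_and_or]
  rw [← hcompl] at hsubJK
  have : SymInf f (J ∩ K)ᶜ < ε := by
    calc SymInf f (J ∩ K)ᶜ ≤ SymInf f Jᶜ + SymInf f Kᶜ + c * Real.sqrt γ := hsubJK
      _ < ε / 3 + ε / 3 + ε / 9 := by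
          have := hcr
          linarith
      _ < ε := by linarith
  linarith
end

section
/- Let F be a t-intersecting family of subsets of [n] with t ≥ 1, and let 0 < p < 1/(t+1). Then the p-biased measure of F satisfies μ_p(F) ≤ p^t. -/
/-- A family of subsets of `[n]` is `t`-intersecting if every two members intersect
in at least `t` elements. -/
def Intersecting {n : ℕ} (t : ℕ) (F : Finset (Finset (Fin n))) : Prop :=
  ∀ J ∈ F, ∀ K ∈ F, t ≤ (J ∩ K).card

/-- The `p`-biased measure of a family of subsets of `[n]`. -/
noncomputable def biasedMeasure {n : ℕ} (p : ℝ) (F : Finset (Finset (Fin n))) : ℝ :=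
  ∑ J ∈ F, p ^ J.card * (1 - p) ^ (n - J.card)

open Finset Polynomial

/-!
Friedgut's spectral proof. Let `μ = μ_p(F)` and let `W(S) = f̂(S)²` be the Fourier weights of the
indicator `f` of `F` in the `p`-biased basis, so that `W ≥ 0`, `W(∅) = μ²` and `∑ W(S) = μ`.
For `x, y` put `Φ_{x,y} = ∏ᵢ (1 + χᵢ(x) χᵢ(y) Y)` with `Y = -p/(1-p) - X`: the factors with
`i ∈ x ∩ y` are multiples of `X`, so `X^t ∣ Φ_{x,y}` when `|x ∩ y| ≥ t`. A linear functional `L`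
that reads only the coefficients of `1, X, …, X^(t-1)` therefore kills `Φ_{x,y}` for all
`x, y ∈ F`, and summing over `F × F` gives `∑_S L(Y^|S|) W(S) = 0`. For Friedgut's choice of `L`,
`L(1) = 1` and, when `p ≤ 1/(t+1)`, `L(Y^m) ≥ -c` for all `m ≥ 1`, where `c = p^t/(1-p^t)`; the
latter comes down to the nonnegativity of the partial sums `∑_{k ≤ K} C(M,k) (-p)^k` when
`p (M - K + 1) ≤ 1`. Hoffman's ratio argument then gives `μ ≤ c/(1+c) = p^t`.
-/

theorem sum_range_choose_succ_mul_pow {R : Type*} [CommRing R] (x : R) (N K : ℕ) :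
    ∑ k ∈ range (K + 2), ((N + 1).choose k : R) * x ^ k =
      (1 + x) * ∑ k ∈ range (K + 1), (N.choose k : R) * x ^ k +
        (N.choose (K + 1) : R) * x ^ (K + 1) := by
  calc ∑ k ∈ range (K + 2), ((N + 1).choose k : R) * x ^ k
      = 1 + ∑ k ∈ range (K + 1), (x * ((N.choose k : R) * x ^ k) +
          (N.choose (k + 1) : R) * x ^ (k + 1)) := by
        rw [sum_range_succ']
        simp only [Nat.choose_succ_succ', Nat.cast_add, Nat.choose_zero_right]
        rw [add_comm]; congr 1
        · simp
        · refine sum_congr rfl fun k _ => by ring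
    _ = x * ∑ k ∈ range (K + 1), (N.choose k : R) * x ^ k +
          ∑ k ∈ range (K + 2), (N.choose k : R) * x ^ k := by
        rw [sum_add_distrib, ← mul_sum, sum_range_succ' (fun k => (N.choose k : R) * x ^ k) (K + 1)]
        simp only [Nat.choose_zero_right, Nat.cast_one, pow_zero, mul_one]
        ring
    _ = _ := by rw [show K + 2 = K + 1 + 1 from rfl, sum_range_succ _ (K + 1)]; ring

/-- The even case carries the extra term that keeps the next (odd) partial sum nonnegative. -/
theorem le_sum_range_choose_mul_neg_pow {p : ℝ} :
    ∀ {K M : ℕ}, K < M → p * (M - K + 1) ≤ 1 →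
      (if Even K then ((M - 1).choose K : ℝ) * p ^ K else 0) ≤
        ∑ k ∈ range (K + 1), (M.choose k : ℝ) * (-p) ^ k
  | 0, M, _, _ => by simp
  | K + 1, 0, hKM, _ => by omega
  | K + 1, N + 1, hKM, hp => by
    have hKN : K < N := by omega
    have hpN : p * (N - K + 1) ≤ 1 := by push_cast at hp; linarith
    have hp_half : p ≤ 1 / 2 := by
      have : (2 : ℝ) ≤ N - K + 1 := by
        have : (K : ℝ) + 1 ≤ N := by exact_mod_cast hKN
        linarith
      nlinarith
    have ih := le_sum_range_choose_mul_neg_pow hKN hpN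
    rw [sum_range_choose_succ_mul_pow, Nat.add_sub_cancel, ← sub_eq_add_neg]
    rcases Nat.even_or_odd K with hK | hK
    · rw [if_neg (by simpa [Nat.even_add_one] using hK), (hK.add_one).neg_pow]
      rw [if_pos hK] at ih
      obtain ⟨n, rfl⟩ : ∃ n, N = n + 1 := ⟨N - 1, by omega⟩
      have hchoose : ((n + 1).choose (K + 1) : ℝ) * (K + 1) = (n + 1) * n.choose K := by
        exact_mod_cast (Nat.add_one_mul_choose_eq n K).symm
      have hKn : (K : ℝ) ≤ n := by exact_mod_cast Nat.lt_succ_iff.mp hKN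
      push_cast at hpN ih
      have hratio : p * (n + 1) ≤ (1 - p) * (K + 1) := by nlinarith
      have hterm : ((n + 1).choose (K + 1) : ℝ) * p ^ (K + 1) ≤
          (1 - p) * ((n.choose K : ℝ) * p ^ K) := by
        refine le_of_mul_le_mul_right ?_ (by positivity : (0 : ℝ) < K + 1)
        have := hK.pow_nonneg p
        calc ((n + 1).choose (K + 1) : ℝ) * p ^ (K + 1) * (K + 1)
            = p * (n + 1) * ((n.choose K : ℝ) * p ^ K) := by
              rw [pow_succ]; linear_combination p ^ K * p * hchoose
          _ ≤ (1 - p) * (K + 1) * ((n.choose K : ℝ) * p ^ K) := by gcongr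
          _ = _ := by ring
      linarith [mul_le_mul_of_nonneg_left ih (by linarith : (0 : ℝ) ≤ 1 - p)]
    · rw [if_pos (by simpa [Nat.even_add_one] using hK), (hK.add_one).neg_pow]
      rw [if_neg (by simpa using hK)] at ih
      linarith [mul_nonneg (by linarith : (0 : ℝ) ≤ 1 - p) ih]

theorem one_add_pow_eq_sum_range_add_sum_range {R : Type*} [CommSemiring R] (x : R) (M t : ℕ) :
    (1 + x) ^ M = ∑ k ∈ range (M + 1 - t), (M.choose k : R) * x ^ k +
      ∑ j ∈ range t, (M.choose j : R) * x ^ (M - j) := by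
  rw [add_pow]
  simp only [one_pow, one_mul]
  rcases le_or_gt t (M + 1) with htM | htM
  · rw [← sum_range_add_sum_Ico _ htM, add_comm, sum_Ico_eq_sum_range,
      ← sum_range_reflect (fun k => (M.choose k : R) * x ^ k)]
    congr 1
    · refine sum_congr rfl fun j hj => ?_
      have hj := mem_range.mp hj
      rw [mul_comm, Nat.choose_symm_of_eq_add (show M = t + j + (M + 1 - t - 1 - j) by omega)]
      congr 2; omega
    · simp_rw [mul_comm]
  · rw [Nat.sub_eq_zero_of_le htM.le, sum_range_zero, zero_add]
    simp_rw [mul_comm (x ^ _)]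
    refine sum_subset (range_subset_range.mpr htM.le) fun j _ hj => ?_
    rw [Nat.choose_eq_zero_of_lt (by simpa using hj), Nat.cast_zero, zero_mul]

theorem sum_range_choose_mul_neg_pow_le {p : ℝ} {t : ℕ} (ht : 1 ≤ t) (hp : p * (t + 1) ≤ 1)
    (M : ℕ) : ∑ j ∈ range t, (M.choose j : ℝ) * (-p) ^ (M - j) ≤ (1 - p) ^ M := by
  rw [sub_eq_add_neg, one_add_pow_eq_sum_range_add_sum_range (-p) M t]
  refine le_add_of_nonneg_left ?_
  rcases lt_or_ge M t with hMt | hMt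
  · simp [Nat.sub_eq_zero_of_le hMt]
  · obtain ⟨K, rfl⟩ : ∃ K, M = K + t := ⟨M - t, by omega⟩
    have h := le_sum_range_choose_mul_neg_pow (p := p) (K := K) (M := K + t) (by omega)
      (by push_cast; linarith)
    rw [show K + t + 1 - t = K + 1 by omega]
    split_ifs at h with hK
    · exact le_trans (by have := hK.pow_nonneg p; positivity) h
    · exact h

theorem map_prod_one_add_C_mul {α : Type*} [Fintype α] (φ : ℝ[X] →ₗ[ℝ] ℝ) (Y : ℝ[X]) (a : α → ℝ) :
    φ (∏ i, (1 + C (a i) * Y)) = ∑ S : Finset α, (∏ i ∈ S, a i) * φ (Y ^ #S) := by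
  rw [prod_one_add, powerset_univ, map_sum]
  refine sum_congr rfl fun S _ => ?_
  rw [prod_mul_distrib, prod_const, ← map_prod, ← smul_eq_C_mul, map_smul, smul_eq_mul]

theorem X_pow_card_dvd_prod_one_add_C_mul {α : Type*} [Fintype α] {q : ℝ} {a : α → ℝ}
    {s : Finset α} (hs : ∀ i ∈ s, a i * q = 1) : X ^ #s ∣ ∏ i, (1 + C (a i) * (-C q - X)) := by
  rw [← prod_const]
  refine (prod_dvd_prod_of_dvd _ _ fun i hi => X_dvd_iff.mpr ?_).trans
    (prod_dvd_prod_of_subset _ _ _ (subset_univ s))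
  simp [hs i hi]

section FriedgutFunctional

variable (p : ℝ) (t : ℕ)

/-- The coefficients of Friedgut's functional `L f = ∑_{j<t} c_j [X^j] f`. They are chosen so that
`L 1 = 1` and `L (Y^m) = -p^t/(1-p^t)` for `1 ≤ m ≤ t`, where `Y = -p/(1-p) - X`: these are the
levels that carry the Fourier weight of the extremal family `{x | [t] ⊆ x}`. -/
noncomputable def friedgutCoeff (j : ℕ) : ℝ :=
  (-(p / (1 - p))) ^ j * (1 - p ^ (t - j)) / (1 - p ^ t)

noncomputable def friedgutFunctional : ℝ[X] →ₗ[ℝ] ℝ :=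
  ∑ j ∈ range t, friedgutCoeff p t j • lcoeff ℝ j

noncomputable def friedgutEigenvalue (m : ℕ) : ℝ :=
  friedgutFunctional p t ((-C (p / (1 - p)) - X) ^ m)

variable {p t}

theorem friedgutFunctional_apply (f : ℝ[X]) :
    friedgutFunctional p t f = ∑ j ∈ range t, friedgutCoeff p t j * f.coeff j := by
  simp [friedgutFunctional]

theorem friedgutFunctional_eq_zero_of_X_pow_dvd {f : ℝ[X]} (hf : X ^ t ∣ f) :
    friedgutFunctional p t f = 0 := by
  rw [friedgutFunctional_apply]
  exact sum_eq_zero fun j hj => by rw [X_pow_dvd_iff.mp hf j (mem_range.mp hj), mul_zero]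

theorem friedgutEigenvalue_zero (ht : 1 ≤ t) (hpt : p ^ t ≠ 1) : friedgutEigenvalue p t 0 = 1 := by
  rw [friedgutEigenvalue, pow_zero, friedgutFunctional_apply,
    sum_eq_single_of_mem 0 (mem_range.mpr ht) fun j _ hj => by simp [coeff_one, hj]]
  simp [friedgutCoeff, sub_ne_zero.mpr hpt.symm]

theorem friedgutFunctional_neg_C_sub_X_mul (hp : p ≠ 1) (f : ℝ[X]) :
    friedgutFunctional p t ((-C (p / (1 - p)) - X) * f) =
      -(p ^ t / (1 - p ^ t)) * ∑ j ∈ range t, (-(1 - p)⁻¹) ^ j * f.coeff j := by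
  have hc : friedgutCoeff p t t = 0 := by simp [friedgutCoeff]
  have hX : friedgutFunctional p t (X * f) =
      ∑ j ∈ range t, friedgutCoeff p t (j + 1) * f.coeff j := by
    rw [friedgutFunctional_apply]
    calc ∑ j ∈ range t, friedgutCoeff p t j * (X * f).coeff j
        = ∑ j ∈ range (t + 1), friedgutCoeff p t j * (X * f).coeff j := by
          rw [sum_range_succ, hc, zero_mul, add_zero]
      _ = _ := by simp [sum_range_succ', coeff_X_mul]
  rw [sub_mul, neg_mul, map_sub, map_neg, ← smul_eq_C_mul, map_smul, hX, friedgutFunctional_apply,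
    smul_eq_mul, mul_sum, mul_sum, ← sum_neg_distrib, ← sum_sub_distrib]
  refine sum_congr rfl fun j hj => ?_
  obtain ⟨r, rfl⟩ : ∃ r, t = j + 1 + r := ⟨t - (j + 1), by have := mem_range.mp hj; omega⟩
  simp only [friedgutCoeff, show j + 1 + r - j = r + 1 by omega,
    show j + 1 + r - (j + 1) = r by omega]
  by_cases hpt : 1 - p ^ (j + 1 + r) = 0
  · simp [hpt]
  simp only [neg_pow (p / (1 - p)), neg_pow (1 - p)⁻¹, div_pow, inv_pow]
  field_simp
  ring

theorem one_sub_pow_mul_friedgutEigenvalue_succ (hp : p ≠ 1) (M : ℕ) :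
    (1 - p) ^ M * friedgutEigenvalue p t (M + 1) =
      -(p ^ t / (1 - p ^ t)) * ∑ j ∈ range t, (M.choose j : ℝ) * (-p) ^ (M - j) := by
  have hcoeff : ∀ j, ((-C (p / (1 - p)) - X) ^ M).coeff j =
      (-1) ^ M * ((p / (1 - p)) ^ (M - j) * M.choose j) := by
    intro j
    rw [show -C (p / (1 - p)) - X = C (-1) * (X + C (p / (1 - p))) by simp; ring, mul_pow, ← C_pow,
      coeff_C_mul, coeff_X_add_C_pow]
  rw [friedgutEigenvalue, pow_succ', friedgutFunctional_neg_C_sub_X_mul hp, mul_left_comm, mul_sum]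
  congr 1
  refine sum_congr rfl fun j _ => ?_
  rw [hcoeff]
  rcases le_or_gt j M with hjM | hjM
  · obtain ⟨s, rfl⟩ : ∃ s, M = j + s := ⟨M - j, by omega⟩
    simp only [Nat.add_sub_cancel_left, neg_pow (1 - p)⁻¹, neg_pow p, div_pow, inv_pow]
    have hsq : (-1 : ℝ) ^ j * (-1) ^ j = 1 := by rw [← mul_pow]; norm_num
    field_simp
    linear_combination (1 - p) ^ (j + s) * p ^ s * ((j + s).choose j : ℝ) * (-1) ^ s * hsq
  · simp [Nat.choose_eq_zero_of_lt hjM]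

theorem neg_le_friedgutEigenvalue (hp : 0 ≤ p) (ht : 1 ≤ t) (hpt : p * (t + 1) ≤ 1) {m : ℕ}
    (hm : 1 ≤ m) : -(p ^ t / (1 - p ^ t)) ≤ friedgutEigenvalue p t m := by
  obtain ⟨M, rfl⟩ : ∃ M, m = M + 1 := ⟨m - 1, by omega⟩
  have hp1 : p < 1 := by
    have : (1 : ℝ) ≤ t := by exact_mod_cast ht
    nlinarith
  have hc : 0 ≤ p ^ t / (1 - p ^ t) :=
    div_nonneg (pow_nonneg hp t) (sub_nonneg.mpr (pow_le_one₀ hp hp1.le))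
  have hB := sum_range_choose_mul_neg_pow_le ht hpt M
  refine le_of_mul_le_mul_left ?_ (pow_pos (sub_pos.mpr hp1) M)
  rw [one_sub_pow_mul_friedgutEigenvalue_succ hp1.ne]
  nlinarith

end FriedgutFunctional

section BiasedFourier

variable {α : Type*} (p : ℝ)

noncomputable def biasedWeight [Fintype α] (x : Finset α) : ℝ :=
  p ^ #x * (1 - p) ^ (Fintype.card α - #x)

variable [DecidableEq α]

noncomputable def centeredIndicator (x : Finset α) (i : α) : ℝ := (if i ∈ x then 1 else 0) - p

noncomputable def charProd (x y : Finset α) (i : α) : ℝ :=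
  centeredIndicator p x i * centeredIndicator p y i / (p * (1 - p))

variable {p} in
theorem charProd_mul_of_mem_inter (hp0 : p ≠ 0) (hp1 : p ≠ 1) {x y : Finset α} {i : α}
    (hi : i ∈ x ∩ y) : charProd p x y i * (p / (1 - p)) = 1 := by
  rw [mem_inter] at hi
  simp [charProd, centeredIndicator, hi.1, hi.2]
  field_simp

variable [Fintype α]

/-- `f̂(S)²` for the indicator `f` of `F`, in the orthonormal basis
`χ_S(x) = ∏_{i ∈ S} (1_{i ∈ x} - p) / √(p(1-p))` of `L²(μ_p)`; `charProd p x y i = χᵢ(x) χᵢ(y)`. -/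
noncomputable def fourierWeight (F : Finset (Finset α)) (S : Finset α) : ℝ :=
  ∑ x ∈ F, ∑ y ∈ F, biasedWeight p x * biasedWeight p y * ∏ i ∈ S, charProd p x y i

variable {p}

theorem prod_one_add_charProd (hp0 : p ≠ 0) (hp1 : p ≠ 1) (x y : Finset α) :
    ∏ i, (1 + charProd p x y i) = if x = y then (biasedWeight p x)⁻¹ else 0 := by
  split_ifs with hxy
  · subst hxy
    have h : ∀ i, 1 + charProd p x x i = if i ∈ x then p⁻¹ else (1 - p)⁻¹ := by
      intro i
      split_ifs with hi <;> simp [charProd, centeredIndicator, hi] <;> field_simp <;> ring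
    simp_rw [h]
    rw [prod_ite, biasedWeight]
    simp [filter_notMem_eq_sdiff, card_univ_sdiff, mul_comm]
  · obtain ⟨i, hi⟩ : ∃ i, ¬(i ∈ x ↔ i ∈ y) := by
      by_contra! h
      exact hxy (Finset.ext h)
    refine prod_eq_zero (mem_univ i) ?_
    have hy : i ∈ y ↔ i ∉ x := (not_iff.mp hi).symm
    by_cases hx : i ∈ x <;> simp [charProd, centeredIndicator, hx, hy] <;> field_simp <;> ring

theorem sum_fourierWeight (hp0 : p ≠ 0) (hp1 : p ≠ 1) (F : Finset (Finset α)) :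
    ∑ S, fourierWeight p F S = ∑ x ∈ F, biasedWeight p x := by
  simp only [fourierWeight]
  rw [sum_comm]
  refine sum_congr rfl fun x hx => ?_
  rw [sum_comm, sum_eq_single_of_mem x hx fun y _ hyx => ?_]
  · rw [← mul_sum, ← powerset_univ, ← prod_one_add, prod_one_add_charProd hp0 hp1, if_pos rfl]
    have : biasedWeight p x ≠ 0 := by
      simp [biasedWeight, hp0, sub_ne_zero.mpr hp1.symm]
    field_simp
  · rw [← mul_sum, ← powerset_univ, ← prod_one_add, prod_one_add_charProd hp0 hp1,
      if_neg (Ne.symm hyx), mul_zero]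

theorem fourierWeight_empty (F : Finset (Finset α)) :
    fourierWeight p F ∅ = (∑ x ∈ F, biasedWeight p x) ^ 2 := by
  simp [fourierWeight, sq, sum_mul_sum]

theorem fourierWeight_nonneg (hp0 : 0 ≤ p) (hp1 : p ≤ 1) (F : Finset (Finset α)) (S : Finset α) :
    0 ≤ fourierWeight p F S := by
  have h : fourierWeight p F S =
      (∑ x ∈ F, biasedWeight p x * ∏ i ∈ S, centeredIndicator p x i) ^ 2 / (p * (1 - p)) ^ #S := by
    simp only [fourierWeight, charProd, prod_div_distrib, prod_mul_distrib, prod_const, sq,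
      sum_mul_sum, sum_div]
    refine sum_congr rfl fun x _ => sum_congr rfl fun y _ => by rw [mul_pow]; ring
  rw [h]
  have : 0 ≤ 1 - p := sub_nonneg.mpr hp1
  positivity

theorem sum_map_pow_card_mul_fourierWeight (φ : ℝ[X] →ₗ[ℝ] ℝ) (Y : ℝ[X]) (F : Finset (Finset α)) :
    ∑ S, φ (Y ^ #S) * fourierWeight p F S =
      ∑ x ∈ F, ∑ y ∈ F, biasedWeight p x * biasedWeight p y *
        φ (∏ i, (1 + C (charProd p x y i) * Y)) := by
  simp only [map_prod_one_add_C_mul, fourierWeight, mul_sum]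
  rw [sum_comm]
  refine sum_congr rfl fun x _ => ?_
  rw [sum_comm]
  exact sum_congr rfl fun y _ => sum_congr rfl fun S _ => by ring

theorem sum_friedgutEigenvalue_mul_fourierWeight_eq_zero (hp0 : p ≠ 0) (hp1 : p ≠ 1) {t : ℕ}
    {F : Finset (Finset α)} (hF : ∀ x ∈ F, ∀ y ∈ F, t ≤ #(x ∩ y)) :
    ∑ S, friedgutEigenvalue p t #S * fourierWeight p F S = 0 := by
  simp only [friedgutEigenvalue]
  rw [sum_map_pow_card_mul_fourierWeight]
  refine sum_eq_zero fun x hx => sum_eq_zero fun y hy => ?_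
  have hdvd := X_pow_card_dvd_prod_one_add_C_mul (s := x ∩ y) fun i hi =>
    charProd_mul_of_mem_inter hp0 hp1 hi
  rw [friedgutFunctional_eq_zero_of_X_pow_dvd ((pow_dvd_pow X (hF x hx y hy)).trans hdvd),
    mul_zero]

end BiasedFourier

theorem le_div_one_add_of_sum_mul_eq_zero {ι : Type*} [Fintype ι] [DecidableEq ι]
    {W ev : ι → ℝ} {i₀ : ι} {μ c : ℝ} (hc : 0 ≤ c) (hW : ∀ i, 0 ≤ W i) (hW₀ : W i₀ = μ ^ 2)
    (hsum : ∑ i, W i = μ) (hev₀ : ev i₀ = 1) (hev : ∀ i ≠ i₀, -c ≤ ev i)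
    (horth : ∑ i, ev i * W i = 0) : μ ≤ c / (1 + c) := by
  have hrest : ∑ i ∈ univ.erase i₀, W i = μ - μ ^ 2 := by
    have := add_sum_erase univ W (mem_univ i₀)
    rw [hW₀, hsum] at this
    linarith
  have hbound : -c * (μ - μ ^ 2) ≤ ∑ i ∈ univ.erase i₀, ev i * W i := by
    rw [← hrest, mul_sum]
    exact sum_le_sum fun i hi => mul_le_mul_of_nonneg_right (hev i (ne_of_mem_erase hi)) (hW i)
  have hsplit : μ ^ 2 + ∑ i ∈ univ.erase i₀, ev i * W i = 0 := by
    rw [← horth, ← add_sum_erase _ _ (mem_univ i₀), hev₀, hW₀, one_mul]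
  rw [le_div_iff₀ (by positivity)]
  by_contra! h
  have hμ : 0 < μ := by nlinarith
  nlinarith

/-- Dinur–Safra / Friedgut: `t`-intersecting families have `p`-biased
measure at most `p^t` for `p < 1/(t+1)`. -/
theorem biasedMeasure_intersecting_le (n t : ℕ) (ht : 1 ≤ t)
    (F : Finset (Finset (Fin n))) (hF : Intersecting t F)
    (p : ℝ) (hp : 0 < p) (hp' : p < 1 / (t + 1)) :
    biasedMeasure p F ≤ p ^ t := by
  have hpt : p * (t + 1) ≤ 1 := ((lt_div_iff₀ (by positivity)).mp hp').le
  have hp1 : p < 1 := by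
    have : (1 : ℝ) ≤ t := by exact_mod_cast ht
    nlinarith
  have hpt1 : p ^ t < 1 := pow_lt_one₀ hp.le hp1 (by omega)
  have horth := sum_friedgutEigenvalue_mul_fourierWeight_eq_zero hp.ne' hp1.ne hF
  have hbound := le_div_one_add_of_sum_mul_eq_zero (div_nonneg (pow_nonneg hp.le t) (by linarith))
    (fourierWeight_nonneg hp.le hp1.le F) (fourierWeight_empty F)
    (sum_fourierWeight hp.ne' hp1.ne F)
    (friedgutEigenvalue_zero ht hpt1.ne) (fun S hS => neg_le_friedgutEigenvalue hp.le ht hpt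
      (card_pos.mpr (nonempty_iff_ne_empty.mpr hS))) horth
  have hc : p ^ t / (1 - p ^ t) / (1 + p ^ t / (1 - p ^ t)) = p ^ t := by
    field_simp [(sub_pos.mpr hpt1).ne']
    ring
  simpa [biasedMeasure, biasedWeight, hc] using hbound
end
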